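/- arXiv:2105.09631 — 4 statements merged into one kernel-verified Lean document; each statement's English description precedes it below -/
import Mathlib

section
/- Let P ∈ ℚ⟨x,y⟩[[T,A,B]] be of the form S·v with S a central parameter and v ∈ {x,y}. Then for any w₀,…,w_m ∈ 𝔥[[T,A,B]] and letters u₁,…,u_m ∈ {x,y}, we have (1-P)^{-1} ⧢ (w₀u₁w₁⋯u_mw_m) = ((1-P)^{-1}⧢w₀) u₁ ((1-P)^{-1}⧢w₁) ⋯ u_m ((1-P)^{-1}⧢w_m). -/
/-!
Since `P = S·v`, the inverse `(1 - P)⁻¹ = ∑ₙ Sⁿvⁿ` is a geometric series. In a shuffle of `vⁿ`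
with `w c w'`, where `c` is a letter, some `k` of the `v`s land before `c` and the other `l` after
it, so `vⁿ ⧢ (w c w') = ∑_{k+l=n} (vᵏ ⧢ w) c (vˡ ⧢ w')`. Weighting by `Sⁿ = SᵏSˡ` and summing
gives `(1-P)⁻¹ ⧢ (w c w') = ((1-P)⁻¹ ⧢ w) c ((1-P)⁻¹ ⧢ w')`, and induction on the number of
letters `uⱼ` finishes the proof.
-/

open scoped BigOperators

abbrev Ltr := Fin 2

/-- `𝔥 = ℚ⟨x,y⟩`, realized as the monoid algebra of the free monoid on two letters. -/
abbrev H := MonoidAlgebra ℚ (FreeMonoid Ltr)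

/-- The word `u₁⋯u_m` as an element of `𝔥`. -/
noncomputable def wrd (l : List Ltr) : H := MonoidAlgebra.of ℚ (FreeMonoid Ltr) (FreeMonoid.ofList l)

/-- The generator `x`. -/
noncomputable def Xh : H := wrd [0]
/-- The generator `y`. -/
noncomputable def Yh : H := wrd [1]

/-- The shuffle product on words: `w⧢1 = 1⧢w = w`,
`u₁w₁ ⧢ u₂w₂ = u₁(w₁ ⧢ u₂w₂) + u₂(u₁w₁ ⧢ w₂)`. -/
noncomputable def shW : List Ltr → List Ltr → H
  | [], v => wrd v
  | u, [] => wrd u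
  | a :: u, b :: v => wrd [a] * shW u (b :: v) + wrd [b] * shW (a :: u) v
termination_by u v => u.length + v.length

/-- The shuffle product `⧢` on `𝔥`, extended bilinearly. -/
noncomputable def shuf (f g : H) : H :=
  f.coeff.sum fun u cu => g.coeff.sum fun v cv => (cu * cv) • shW u.toList v.toList

/-- `𝔥[[T,A,B]]`. -/
abbrev PS3 := MvPowerSeries (Fin 3) H

/-- The shuffle product extended bilinearly and coefficientwise to `𝔥[[T,A,B]]`
(the central parameters multiply as usual). -/
noncomputable def shuf3 (f g : PS3) : PS3 := fun n =>
  ∑ p ∈ Finset.HasAntidiagonal.antidiagonal n,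
    shuf (MvPowerSeries.coeff p.1 f) (MvPowerSeries.coeff p.2 g)

/-- The element `S · v` of `𝔥[[T,A,B]]`, where `S` is the `i`-th parameter
(among `T,A,B`) and `v ∈ {x,y}`. -/
noncomputable def Pelt (i : Fin 3) (u : Ltr) : PS3 :=
  MvPowerSeries.X i * MvPowerSeries.C (wrd [u])

/-- The element `w₀u₁w₁⋯u_mw_m` of `𝔥[[T,A,B]]`, given `w₀` and the list
`[(u₁,w₁),…,(u_m,w_m)]`. -/
noncomputable def chain (w₀ : PS3) (l : List (Ltr × PS3)) : PS3 :=
  w₀ * (l.map fun p => MvPowerSeries.C (wrd [p.1]) * p.2).prod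

open Finset

lemma wrd_nil : wrd [] = 1 := map_one _

lemma wrd_append (a b : List Ltr) : wrd (a ++ b) = wrd a * wrd b := by
  unfold wrd; rw [← map_mul]; rfl

lemma wrd_cons (a : Ltr) (w : List Ltr) : wrd (a :: w) = wrd [a] * wrd w :=
  wrd_append [a] w

lemma wrd_replicate (n : ℕ) (v : Ltr) : wrd (List.replicate n v) = wrd [v] ^ n := by
  induction n with
  | zero => exact wrd_nil
  | succ n ih => rw [List.replicate_succ, wrd_cons, ih, pow_succ']

lemma shW_nil_left (w : List Ltr) : shW [] w = wrd w := by cases w <;> simp [shW]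

lemma shW_nil_right (w : List Ltr) : shW w [] = wrd w := by cases w <;> simp [shW]

lemma shW_cons_cons (a b : Ltr) (u v : List Ltr) :
    shW (a :: u) (b :: v) = wrd [a] * shW u (b :: v) + wrd [b] * shW (a :: u) v := by
  rw [shW]

lemma shW_replicate_append_cons (v c : Ltr) (A B : List Ltr) (n : ℕ) :
    shW (List.replicate n v) (A ++ c :: B) =
      ∑ k ∈ antidiagonal n,
        shW (List.replicate k.1 v) A * wrd [c] * shW (List.replicate k.2 v) B := by
  induction A generalizing n with
  | nil =>
    induction n with
    | zero => simp [shW_nil_left, ← wrd_append]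
    | succ n ih =>
      rw [Nat.sum_antidiagonal_succ, List.replicate_succ, List.nil_append, shW_cons_cons,
        ← List.nil_append (c :: B), ih, mul_sum, add_comm]
      simp only [List.replicate_zero, List.replicate_succ, shW_nil_right, wrd_nil,
        one_mul, wrd_cons v (List.replicate _ v), mul_assoc]
  | cons a A ihA =>
    induction n with
    | zero => simp [shW_nil_left, ← wrd_append]
    | succ n ih =>
      rw [List.replicate_succ, List.cons_append, shW_cons_cons, ← List.cons_append, ih,
        ← List.replicate_succ, ihA, Nat.sum_antidiagonal_succ, Nat.sum_antidiagonal_succ]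
      have hnil : shW [] (a :: A) = wrd [a] * shW [] A := by
        rw [shW_nil_left, shW_nil_left, wrd_cons]
      have hcons (k : ℕ) : shW (List.replicate (k + 1) v) (a :: A) =
          wrd [v] * shW (List.replicate k v) (a :: A) + wrd [a] * shW (List.replicate (k + 1) v) A :=
        shW_cons_cons ..
      simp only [List.replicate_zero, hnil, hcons, mul_sum, add_mul, sum_add_distrib,
        mul_add, mul_assoc]
      abel

lemma shuf_zero_left (g : H) : shuf 0 g = 0 := by simp [shuf]

lemma shuf_zero_right (f : H) : shuf f 0 = 0 := by simp [shuf]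

lemma shuf_add_right (f g g' : H) : shuf f (g + g') = shuf f g + shuf f g' := by
  unfold shuf
  rw [← Finsupp.sum_add]
  refine Finsupp.sum_congr fun u _ => ?_
  rw [MonoidAlgebra.coeff_add, Finsupp.sum_add_index' (fun _ => by simp) fun _ _ _ => ?_]
  rw [mul_add, add_smul]

lemma shuf_smul_right (c : ℚ) (f g : H) : shuf f (c • g) = c • shuf f g := by
  unfold shuf
  rw [Finsupp.smul_sum]
  refine Finsupp.sum_congr fun u _ => ?_
  rw [MonoidAlgebra.coeff_smul, Finsupp.sum_smul_index' fun _ => by simp, Finsupp.smul_sum]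
  refine Finsupp.sum_congr fun _ _ => ?_
  rw [smul_eq_mul, mul_left_comm, mul_smul]

lemma shuf_sum_right {ι : Type*} (s : Finset ι) (f : H) (g : ι → H) :
    shuf f (∑ x ∈ s, g x) = ∑ x ∈ s, shuf f (g x) :=
  map_sum (AddMonoidHom.mk' (shuf f) (shuf_add_right f)) g s

lemma wrd_eq_single (w : List Ltr) : wrd w = MonoidAlgebra.single (FreeMonoid.ofList w) 1 := rfl

lemma single_eq_smul_wrd (x : FreeMonoid Ltr) (q : ℚ) :
    MonoidAlgebra.single x q = q • wrd x.toList := by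
  rw [wrd_eq_single, MonoidAlgebra.smul_single, smul_eq_mul, mul_one, FreeMonoid.ofList_toList]

lemma shuf_wrd_wrd (u w : List Ltr) : shuf (wrd u) (wrd w) = shW u w := by
  simp [shuf, wrd_eq_single, MonoidAlgebra.coeff_single]

lemma shuf_wrd_pow_mul_wrd_mul (v c : Ltr) (n : ℕ) (f g : H) :
    shuf (wrd [v] ^ n) (f * wrd [c] * g) =
      ∑ k ∈ antidiagonal n, shuf (wrd [v] ^ k.1) f * wrd [c] * shuf (wrd [v] ^ k.2) g := by
  induction f using MonoidAlgebra.induction_linear generalizing g with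
  | zero => simp [shuf_zero_right]
  | add f₁ f₂ ih₁ ih₂ =>
    simp only [add_mul, shuf_add_right, ih₁, ih₂, ← sum_add_distrib]
  | single x q =>
    induction g using MonoidAlgebra.induction_linear with
    | zero => simp [shuf_zero_right]
    | add g₁ g₂ ih₁ ih₂ =>
      simp only [mul_add, shuf_add_right, ih₁, ih₂, ← sum_add_distrib]
    | single y r =>
      simp only [single_eq_smul_wrd, smul_mul_assoc, mul_smul_comm, shuf_smul_right,
        ← smul_sum]
      rw [← wrd_append, ← wrd_append, List.append_assoc, List.singleton_append,
        ← wrd_replicate, shuf_wrd_wrd, shW_replicate_append_cons]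
      simp only [← wrd_replicate, shuf_wrd_wrd]

namespace MvPowerSeries

variable {σ R : Type*}

lemma X_mul_C_eq_monomial [Semiring R] (i : σ) (a : R) :
    X i * C a = monomial (Finsupp.single i 1) a := by
  rw [X, ← monomial_zero_eq_C, monomial_mul_monomial, add_zero, one_mul]

variable [DecidableEq σ]

lemma coeff_mul_C_mul [Semiring R] (A B : MvPowerSeries σ R) (w : R) (n : σ →₀ ℕ) :
    coeff n (A * C w * B) = ∑ p ∈ antidiagonal n, coeff p.1 A * w * coeff p.2 B := by
  rw [coeff_mul]
  simp only [coeff_mul_C]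

/-- The series `∑ₙ aⁿ Xᵢⁿ`. -/
noncomputable def geomSeries [Semiring R] (i : σ) (a : R) : MvPowerSeries σ R := fun p =>
  if p = Finsupp.single i (p i) then a ^ p i else 0

section Semiring

variable [Semiring R] (i : σ) (a : R)

lemma coeff_geomSeries_single (n : ℕ) :
    coeff (Finsupp.single i n) (geomSeries i a) = a ^ n := by
  simp [geomSeries, coeff_apply]

lemma coeff_geomSeries_of_forall_ne {p : σ →₀ ℕ} (hp : ∀ n, p ≠ Finsupp.single i n) :
    coeff p (geomSeries i a) = 0 :=
  if_neg (hp _)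

end Semiring

lemma one_sub_X_mul_C_mul_geomSeries [Ring R] (i : σ) (a : R) :
    (1 - X i * C a) * geomSeries i a = 1 := by
  ext p
  rw [sub_mul, one_mul, map_sub, X_mul_C_eq_monomial, coeff_monomial_mul, coeff_one]
  by_cases hp : ∃ n, p = Finsupp.single i n
  · obtain ⟨n, rfl⟩ := hp
    cases n with
    | zero => simp only [coeff_geomSeries_single]; simp
    | succ n =>
      have hsub : Finsupp.single i (n + 1) - Finsupp.single i 1 = Finsupp.single i n := by
        rw [← Finsupp.single_tsub, Nat.add_sub_cancel]
      simp only [coeff_geomSeries_single, hsub]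
      simp [pow_succ']
  · push Not at hp
    have hp0 : p ≠ 0 := by simpa using hp 0
    rw [coeff_geomSeries_of_forall_ne i a hp, if_neg hp0, zero_sub, neg_eq_zero, ite_eq_right_iff]
    intro hle
    rw [coeff_geomSeries_of_forall_ne i a, mul_zero]
    intro n hn
    apply hp (n + 1)
    rw [Finsupp.single_add, ← hn, tsub_add_cancel_of_le hle]

end MvPowerSeries

/-- Reindexing along `(a + b) + (c + d) = (a + c) + (b + d)`. -/
lemma Finset.sum_antidiagonal_antidiagonal_comm {A M : Type*} [AddCommMonoid A]
    [HasAntidiagonal A] [AddCommMonoid M] (n : A) (F : A → A → A → A → M) :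
    ∑ st ∈ antidiagonal n, ∑ x ∈ antidiagonal st.1, ∑ y ∈ antidiagonal st.2,
        F x.1 y.1 x.2 y.2 =
      ∑ st ∈ antidiagonal n, ∑ x ∈ antidiagonal st.1, ∑ y ∈ antidiagonal st.2,
        F x.1 x.2 y.1 y.2 := by
  simp only [sum_sigma']
  apply sum_nbij' (fun ⟨⟨_, _⟩, ⟨⟨a, b⟩, ⟨c, d⟩⟩⟩ ↦ ⟨(a + c, b + d), ⟨(a, c), (b, d)⟩⟩)
    (fun ⟨⟨_, _⟩, ⟨⟨a, c⟩, ⟨b, d⟩⟩⟩ ↦ ⟨(a + b, c + d), ⟨(a, b), (c, d)⟩⟩) <;>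
    aesop (add simp [add_add_add_comm])

open MvPowerSeries

lemma shuf_coeff_geomSeries_mul_wrd_mul {σ : Type*} [DecidableEq σ] (i : σ) (v c : Ltr)
    (p : σ →₀ ℕ) (f g : H) :
    shuf (coeff p (geomSeries i (wrd [v]))) (f * wrd [c] * g) =
      ∑ q ∈ antidiagonal p, shuf (coeff q.1 (geomSeries i (wrd [v]))) f * wrd [c] *
        shuf (coeff q.2 (geomSeries i (wrd [v]))) g := by
  by_cases hp : ∃ n, p = Finsupp.single i n
  · obtain ⟨n, rfl⟩ := hp
    simp [coeff_geomSeries_single, shuf_wrd_pow_mul_wrd_mul]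
  · push Not at hp
    rw [coeff_geomSeries_of_forall_ne i _ hp, shuf_zero_left]
    refine (sum_eq_zero fun q hq => ?_).symm
    by_cases hq₁ : ∃ a, q.1 = Finsupp.single i a
    · obtain ⟨a, ha⟩ := hq₁
      have hq₂ : ∀ b, q.2 ≠ Finsupp.single i b := by
        rintro b hb
        apply hp (a + b)
        rw [← mem_antidiagonal.mp hq, ha, hb, Finsupp.single_add]
      rw [coeff_geomSeries_of_forall_ne i _ hq₂, shuf_zero_left, mul_zero]
    · push Not at hq₁
      rw [coeff_geomSeries_of_forall_ne i _ hq₁, shuf_zero_left, zero_mul, zero_mul]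

lemma coeff_shuf3 (F W : PS3) (n : Fin 3 →₀ ℕ) :
    coeff n (shuf3 F W) = ∑ p ∈ antidiagonal n, shuf (coeff p.1 F) (coeff p.2 W) := rfl

lemma shuf3_geomSeries_mul_C_wrd_mul (i : Fin 3) (v c : Ltr) (A B : PS3) :
    shuf3 (geomSeries i (wrd [v])) (A * C (wrd [c]) * B) =
      shuf3 (geomSeries i (wrd [v])) A * C (wrd [c]) * shuf3 (geomSeries i (wrd [v])) B := by
  refine MvPowerSeries.ext fun n => ?_
  simp only [coeff_mul_C_mul, coeff_shuf3, shuf_sum_right, shuf_coeff_geomSeries_mul_wrd_mul,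
    sum_mul, mul_sum]
  simp only [sum_comm (s := antidiagonal (_ : (_ × _)).2)]
  exact sum_antidiagonal_antidiagonal_comm n fun a b c' d =>
    shuf (coeff a (geomSeries i (wrd [v]))) (coeff b A) * wrd [c] *
      shuf (coeff c' (geomSeries i (wrd [v]))) (coeff d B)

lemma chain_cons (w : PS3) (a : Ltr) (W : PS3) (t : List (Ltr × PS3)) :
    chain w ((a, W) :: t) = w * C (wrd [a]) * chain W t := by
  simp only [chain, List.map_cons, List.prod_cons, mul_assoc]

theorem stmt1_general (i : Fin 3) (u : Ltr) (G : PS3)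
    (h' : G * (1 - Pelt i u) = 1)
    (w₀ : PS3) (l : List (Ltr × PS3)) :
    shuf3 G (chain w₀ l) = chain (shuf3 G w₀) (l.map fun p => (p.1, shuf3 G p.2)) := by
  obtain rfl : G = geomSeries i (wrd [u]) :=
    left_inv_eq_right_inv h' (one_sub_X_mul_C_mul_geomSeries i (wrd [u]))
  induction l generalizing w₀ with
  | nil => simp [chain]
  | cons p l ih =>
    rw [chain_cons, shuf3_geomSeries_mul_C_wrd_mul, ih, List.map_cons, chain_cons]

/-- For `P = S·v`, one has
`(1-P)⁻¹ ⧢ (w₀u₁w₁⋯u_mw_m) = ((1-P)⁻¹⧢w₀)u₁((1-P)⁻¹⧢w₁)⋯u_m((1-P)⁻¹⧢w_m)`. -/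
theorem stmt1 (i : Fin 3) (u : Ltr) (G : PS3)
    (h : (1 - Pelt i u) * G = 1) (h' : G * (1 - Pelt i u) = 1)
    (w₀ : PS3) (l : List (Ltr × PS3)) :
    shuf3 G (chain w₀ l) = chain (shuf3 G w₀) (l.map fun p => (p.1, shuf3 G p.2)) :=
  stmt1_general i u G h' w₀ l
end

section
/- For n ∈ ℤ and w ∈ 𝔥, the operator f_n satisfies f_n(xw) = x f_n(w) + y f_{n-1}(xw) and f_n(yw) = y f_n(w) - y f_{n-1}(xw). -/
/-!
Extend `yⁿ ⋄ w` by zero to all `n ∈ ℤ`. Then `f_n(w) = yⁿ ⋄ w - (y^{n-1} ⋄ w) y` holds for every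
integer `n`, and the defining rules of `⋄` become, for every `n ∈ ℤ`,
`yⁿ ⋄ xw = x (yⁿ ⋄ w) + y (y^{n-1} ⋄ xw)` and `yⁿ ⋄ yw = y (yⁿ ⋄ w) - y (y^{n-1} ⋄ xw)`.
Substituting these for `n` and `n - 1` into `f_n(xw)` and `f_n(yw)` and expanding gives both
identities.
-/

open scoped BigOperators

/-- `dn n w = yⁿ ⋄ w` where `⋄` is the bilinear map with `1⋄w = w⋄1 = w`,
`yw₁ ⋄ yw₂ = y(yw₁ ⋄ w₂) - y(w₁ ⋄ xw₂)` and `yw₁ ⋄ xw₂ = x(yw₁ ⋄ w₂) + y(w₁ ⋄ xw₂)`. -/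
noncomputable def dn : ℕ → List Ltr → H
  | 0, u => wrd u
  | n + 1, [] => wrd (List.replicate (n + 1) 1)
  | n + 1, a :: u =>
      if a = 0 then Xh * dn (n + 1) u + Yh * dn n (a :: u)
      else Yh * dn (n + 1) u - Yh * dn n ((0 : Ltr) :: u)
termination_by n u => (n, u.length)

/-- `dia n f = yⁿ ⋄ f`, extended linearly. -/
noncomputable def dia (n : ℕ) (f : H) : H := f.coeff.sum fun u c => c • dn n u.toList

/-- `f_n : 𝔥 → 𝔥` for `n ∈ ℤ`: `f_n = 0` for `n < 0`, `f₀ = id`, and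
`f_n(w) = yⁿ ⋄ w - (y^{n-1} ⋄ w)y` for `n ≥ 1`. -/
noncomputable def fZ (n : ℤ) (f : H) : H :=
  if n < 0 then 0 else if n = 0 then f else dia n.toNat f - dia (n.toNat - 1) f * Yh

lemma dn_succ_cons_zero (n : ℕ) (u : List Ltr) :
    dn (n + 1) (0 :: u) = Xh * dn (n + 1) u + Yh * dn n (0 :: u) := by
  rw [dn]; rfl

lemma dn_succ_cons_one (n : ℕ) (u : List Ltr) :
    dn (n + 1) (1 :: u) = Yh * dn (n + 1) u - Yh * dn n (0 :: u) := by
  rw [dn]; rfl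

lemma dia_add (n : ℕ) (f g : H) : dia n (f + g) = dia n f + dia n g := by
  unfold dia
  rw [MonoidAlgebra.coeff_add]
  exact Finsupp.sum_add_index' (fun _ => zero_smul ℚ _) (fun _ _ _ => add_smul _ _ _)

lemma dia_single (n : ℕ) (a : FreeMonoid Ltr) (c : ℚ) :
    dia n (MonoidAlgebra.single a c) = c • dn n a.toList := by
  simp [dia, Finsupp.sum_single_index]

lemma dia_zero_left (f : H) : dia 0 f = f := by
  induction f using MonoidAlgebra.induction_linear with
  | zero => simp [dia]
  | add f g hf hg => rw [dia_add, hf, hg]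
  | single a c => simp [dia_single, dn, wrd]

lemma wrd_singleton_mul_single (l : Ltr) (a : FreeMonoid Ltr) (c : ℚ) :
    wrd [l] * MonoidAlgebra.single a c = MonoidAlgebra.single (FreeMonoid.of l * a) c := by
  simp [wrd, MonoidAlgebra.single_mul_single]

lemma dia_succ_Xh_mul (n : ℕ) (w : H) :
    dia (n + 1) (Xh * w) = Xh * dia (n + 1) w + Yh * dia n (Xh * w) := by
  induction w using MonoidAlgebra.induction_linear with
  | zero => simp [dia]
  | add f g hf hg => simp only [mul_add, dia_add, hf, hg]; abel
  | single a c =>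
    simp only [Xh, wrd_singleton_mul_single, dia_single, FreeMonoid.toList_of_mul,
      dn_succ_cons_zero, smul_add, mul_smul_comm]

lemma dia_succ_Yh_mul (n : ℕ) (w : H) :
    dia (n + 1) (Yh * w) = Yh * dia (n + 1) w - Yh * dia n (Xh * w) := by
  induction w using MonoidAlgebra.induction_linear with
  | zero => simp [dia]
  | add f g hf hg => simp only [mul_add, dia_add, hf, hg]; abel
  | single a c =>
    simp only [Xh, Yh, wrd_singleton_mul_single, dia_single, FreeMonoid.toList_of_mul,
      dn_succ_cons_one, smul_sub, mul_smul_comm]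

noncomputable def diaInt (n : ℤ) (f : H) : H := if n < 0 then 0 else dia n.toNat f

lemma diaInt_of_neg {n : ℤ} (hn : n < 0) (f : H) : diaInt n f = 0 := if_pos hn

lemma diaInt_natCast (m : ℕ) (f : H) : diaInt m f = dia m f := by
  simp [diaInt]

lemma diaInt_neg_one (f : H) : diaInt (-1) f = 0 := diaInt_of_neg (by norm_num) f

lemma diaInt_zero (f : H) : diaInt 0 f = f := by
  simpa [dia_zero_left] using diaInt_natCast 0 f

lemma diaInt_Xh_mul (n : ℤ) (w : H) :
    diaInt n (Xh * w) = Xh * diaInt n w + Yh * diaInt (n - 1) (Xh * w) := by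
  rcases lt_trichotomy n 0 with hn | rfl | hn
  · simp [diaInt_of_neg hn, diaInt_of_neg (by omega : n - 1 < 0)]
  · simp [diaInt_zero, diaInt_neg_one]
  · obtain ⟨m, rfl⟩ : ∃ m : ℕ, n = (m + 1 : ℕ) := ⟨(n - 1).toNat, by omega⟩
    rw [show ((m + 1 : ℕ) : ℤ) - 1 = m by omega]
    simp only [diaInt_natCast]
    exact dia_succ_Xh_mul m w

lemma diaInt_Yh_mul (n : ℤ) (w : H) :
    diaInt n (Yh * w) = Yh * diaInt n w - Yh * diaInt (n - 1) (Xh * w) := by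
  rcases lt_trichotomy n 0 with hn | rfl | hn
  · simp [diaInt_of_neg hn, diaInt_of_neg (by omega : n - 1 < 0)]
  · simp [diaInt_zero, diaInt_neg_one]
  · obtain ⟨m, rfl⟩ : ∃ m : ℕ, n = (m + 1 : ℕ) := ⟨(n - 1).toNat, by omega⟩
    rw [show ((m + 1 : ℕ) : ℤ) - 1 = m by omega]
    simp only [diaInt_natCast]
    exact dia_succ_Yh_mul m w

lemma fZ_eq_diaInt_sub (n : ℤ) (f : H) : fZ n f = diaInt n f - diaInt (n - 1) f * Yh := by
  rcases lt_trichotomy n 0 with hn | rfl | hn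
  · simp [fZ, hn, diaInt_of_neg hn, diaInt_of_neg (by omega : n - 1 < 0)]
  · simp [fZ, diaInt_zero, diaInt_neg_one]
  · obtain ⟨m, rfl⟩ : ∃ m : ℕ, n = (m + 1 : ℕ) := ⟨(n - 1).toNat, by omega⟩
    rw [show ((m + 1 : ℕ) : ℤ) - 1 = m by omega, diaInt_natCast, diaInt_natCast, fZ,
      if_neg (by omega), if_neg (by omega), Int.toNat_natCast, Nat.add_sub_cancel]

/-- For `n ∈ ℤ` and `w ∈ 𝔥`:
`f_n(xw) = x f_n(w) + y f_{n-1}(xw)` and `f_n(yw) = y f_n(w) - y f_{n-1}(xw)`. -/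
theorem stmt7 (n : ℤ) (w : H) :
    fZ n (Xh * w) = Xh * fZ n w + Yh * fZ (n - 1) (Xh * w) ∧
    fZ n (Yh * w) = Yh * fZ n w - Yh * fZ (n - 1) (Xh * w) := by
  simp only [fZ_eq_diaInt_sub]
  rw [diaInt_Yh_mul n, diaInt_Yh_mul (n - 1), diaInt_Xh_mul n, diaInt_Xh_mul (n - 1)]
  constructor <;> noncomm_ring
end

section
/- For complex α, β near 0 with ℜ(α) < 0, the series Σ_{n=0}^{∞} (α+1)_n (α-β+1)_n / ((α-β+2)_n n!) converges to Γ(α-β+2)Γ(-α)/Γ(1-β), where (x)_n denotes the Pochhammer symbol x(x+1)⋯(x+n-1). -/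
/-!
Write `a = α + 1` and `b = α - β + 1`. Since `(b)ₙ / (b + 1)ₙ = b / (b + n)`, the series is
`∑ (a)ₙ / n! · b / (b + n)`, and `b / (b + n) = ∫₀¹ b x^(b + n - 1) dx`. Summing under the integral
with the binomial series `∑ (a)ₙ / n! · xⁿ = (1 - x)^(-a)` turns it into
`b · B(b, 1 - a) = Γ(b + 1) Γ(1 - a) / Γ(b + 1 - a)`. The interchange is justified by Euler's limit
formula for `Γ(a)`, which gives `(a)ₙ / n! = O(n^(Re a - 1))`, so that
`∑ ∫₀¹ |(a)ₙ / n! · b x^(b + n - 1)| dx` converges as soon as `Re a < 1`.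
-/

open Complex MeasureTheory Set Filter Asymptotics
open scoped Nat Topology

lemma ne_neg_natCast_of_re_pos {z : ℂ} (hz : 0 < z.re) (m : ℕ) : z ≠ -m := by
  rintro rfl
  simp only [neg_re, natCast_re, Left.neg_pos_iff] at hz
  exact (Nat.cast_nonneg m).not_gt hz

lemma ascPochhammer_eval_eq_prod_range {R : Type*} [CommSemiring R] (a : R) (n : ℕ) :
    (ascPochhammer R n).eval a = ∏ j ∈ Finset.range n, (a + j) := by
  induction n with
  | zero => simp
  | succ n ih => rw [ascPochhammer_succ_eval, ih, Finset.prod_range_succ]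

lemma ascPochhammer_eval_ne_zero {a : ℂ} (ha : ∀ m : ℕ, a ≠ -m) (n : ℕ) :
    (ascPochhammer ℂ n).eval a ≠ 0 := by
  rw [ascPochhammer_eval_eq_prod_range]
  exact Finset.prod_ne_zero_iff.mpr fun k _ h ↦ ha k (eq_neg_of_add_eq_zero_left h)

lemma ascPochhammer_eval_div_eval_add_one {b : ℂ} (hb : 0 < b.re) (n : ℕ) :
    (ascPochhammer ℂ n).eval b / (ascPochhammer ℂ n).eval (b + 1) = b / (b + n) := by
  have hb₁ : 0 < (b + 1).re := by simp only [add_re, one_re]; linarith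
  rw [div_eq_div_iff (ascPochhammer_eval_ne_zero (ne_neg_natCast_of_re_pos hb₁) n)
    fun h ↦ ne_neg_natCast_of_re_pos hb n (eq_neg_of_add_eq_zero_left h),
    ← ascPochhammer_succ_eval, ascPochhammer_succ_left]
  simp [Polynomial.eval_comp]

lemma ascPochhammer_eval_div_factorial_eq_choose (a : ℂ) (n : ℕ) :
    (ascPochhammer ℂ n).eval a / n ! = Ring.choose (a + n - 1) n := by
  rw [← Ring.multichoose_eq, div_eq_iff (by simp [Nat.factorial_ne_zero]), mul_comm,
    ← nsmul_eq_mul, Ring.factorial_nsmul_multichoose_eq_ascPochhammer,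
    Polynomial.ascPochhammer_smeval_eq_eval]

lemma hasSum_ascPochhammer_div_factorial_mul_pow (a : ℂ) {x : ℂ} (hx : ‖x‖ < 1) :
    HasSum (fun n ↦ (ascPochhammer ℂ n).eval a / n ! * x ^ n) ((1 - x) ^ (-a)) := by
  have := (one_div_one_sub_cpow_hasFPowerSeriesOnBall_zero a).hasSum (y := x)
    (by simpa [← ofReal_norm] using hx)
  simpa [FormalMultilinearSeries.ofScalars_apply_eq, ascPochhammer_eval_div_factorial_eq_choose,
    cpow_neg, mul_comm] using this

lemma ascPochhammer_eval_div_factorial_eq_GammaSeq {a : ℂ} (ha : ∀ m : ℕ, a ≠ -m) {n : ℕ}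
    (hn : n ≠ 0) :
    (ascPochhammer ℂ n).eval a / n ! = (n : ℂ) ^ a / (a + n) * (GammaSeq a n)⁻¹ := by
  have han : a + n ≠ 0 := fun h ↦ ha n (eq_neg_of_add_eq_zero_left h)
  have hpow : (n : ℂ) ^ a ≠ 0 := by simp [hn]
  rw [GammaSeq, Finset.prod_range_succ, ← ascPochhammer_eval_eq_prod_range]
  field_simp [Nat.factorial_ne_zero]

lemma norm_natCast_cpow_div_add_le {a : ℂ} {n : ℕ} (hn : 0 < n) (ha : 2 * ‖a‖ ≤ n) :
    ‖(n : ℂ) ^ a / (a + n)‖ ≤ 2 * (n : ℝ) ^ (a.re - 1) := by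
  have hn' : (0 : ℝ) < n := Nat.cast_pos.mpr hn
  have hden : (n : ℝ) / 2 ≤ ‖a + n‖ := by
    have := norm_sub_norm_le (n : ℂ) (-a)
    simp only [sub_neg_eq_add, norm_neg, norm_natCast] at this
    linarith [add_comm a (n : ℂ) ▸ this]
  rw [norm_div, norm_natCast_cpow_of_pos hn, Real.rpow_sub_one hn'.ne', div_le_iff₀ (by linarith)]
  calc (n : ℝ) ^ a.re = 2 * ((n : ℝ) ^ a.re / n) * (n / 2) := by field_simp
    _ ≤ 2 * ((n : ℝ) ^ a.re / n) * ‖a + n‖ := by gcongr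

theorem isBigO_ascPochhammer_div_factorial {a : ℂ} (ha : ∀ m : ℕ, a ≠ -m) :
    (fun n : ℕ ↦ (ascPochhammer ℂ n).eval a / n !) =O[atTop] fun n ↦ (n : ℝ) ^ (a.re - 1) := by
  have hGamma : Tendsto (fun n ↦ (GammaSeq a n)⁻¹) atTop (𝓝 (Gamma a)⁻¹) :=
    (GammaSeq_tendsto_Gamma a).inv₀ (Gamma_ne_zero ha)
  have hpow : (fun n : ℕ ↦ (n : ℂ) ^ a / (a + n)) =O[atTop] fun n ↦ (n : ℝ) ^ (a.re - 1) := by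
    refine IsBigO.of_bound 2 ?_
    filter_upwards [eventually_ge_atTop 1, eventually_ge_atTop ⌈2 * ‖a‖⌉₊] with n hn ha'
    rw [Real.norm_of_nonneg (by positivity)]
    exact norm_natCast_cpow_div_add_le hn (Nat.ceil_le.mp ha')
  have hprod := hpow.mul (hGamma.isBigO_one ℝ)
  simp only [mul_one] at hprod
  refine hprod.congr' ?_ EventuallyEq.rfl
  filter_upwards [eventually_ne_atTop 0] with n hn
  exact (ascPochhammer_eval_div_factorial_eq_GammaSeq ha hn).symm

lemma summable_norm_ascPochhammer_div_factorial_div_add {a : ℂ} (ha : ∀ m : ℕ, a ≠ -m)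
    (ha₁ : a.re < 1) {σ : ℝ} (hσ : 0 < σ) :
    Summable fun n : ℕ ↦ ‖(ascPochhammer ℂ n).eval a / (n ! : ℂ)‖ / (σ + n) := by
  refine summable_of_isBigO_nat (g := fun n : ℕ ↦ (n : ℝ) ^ (a.re - 2))
    (Real.summable_nat_rpow.mpr (by linarith)) ?_
  have hinv : (fun n : ℕ ↦ (σ + n)⁻¹) =O[atTop] fun n : ℕ ↦ (n : ℝ)⁻¹ := by
    refine IsBigO.of_bound 1 ?_
    filter_upwards [eventually_gt_atTop 0] with n hn
    have hn' : (0 : ℝ) < n := Nat.cast_pos.mpr hn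
    rw [one_mul, Real.norm_of_nonneg (by positivity), Real.norm_of_nonneg (by positivity)]
    exact inv_anti₀ hn' (by linarith)
  refine ((isBigO_ascPochhammer_div_factorial ha).norm_left.mul hinv).congr'
    (Eventually.of_forall fun n ↦ (div_eq_mul_inv _ _).symm) ?_
  filter_upwards [eventually_ne_atTop 0] with n hn
  rw [show a.re - 2 = a.re - 1 - 1 by ring, Real.rpow_sub_one (Nat.cast_ne_zero.mpr hn) (a.re - 1),
    div_eq_mul_inv]

lemma betaIntegral_eq_integral_Ioo (u v : ℂ) :
    betaIntegral u v = ∫ x in Ioo (0 : ℝ) 1, (x : ℂ) ^ (u - 1) * (1 - (x : ℂ)) ^ (v - 1) := by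
  rw [betaIntegral, intervalIntegral.integral_of_le zero_le_one, integral_Ioc_eq_integral_Ioo]

lemma integral_Ioo_cpow_sub_one {s : ℂ} (hs : 0 < s.re) :
    ∫ x in Ioo (0 : ℝ) 1, (x : ℂ) ^ (s - 1) = 1 / s := by
  simpa [betaIntegral_eq_integral_Ioo] using betaIntegral_eval_one_right hs

lemma integrableOn_Ioo_cpow_sub_one {s : ℂ} (hs : 0 < s.re) :
    IntegrableOn (fun x : ℝ ↦ (x : ℂ) ^ (s - 1)) (Ioo 0 1) := by
  have := betaIntegral_convergent hs (v := 1) (by simp)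
  simp only [sub_self, cpow_zero, mul_one] at this
  exact ((intervalIntegrable_iff_integrableOn_Ioc_of_le zero_le_one).mp this).mono_set
    Ioo_subset_Ioc_self

lemma integral_Ioo_norm_cpow_sub_one {s : ℂ} (hs : 0 < s.re) :
    ∫ x in Ioo (0 : ℝ) 1, ‖(x : ℂ) ^ (s - 1)‖ = 1 / s.re := by
  rw [setIntegral_congr_fun measurableSet_Ioo
    (g := fun x : ℝ ↦ x ^ (s.re - 1)) (fun x hx ↦ by simp [norm_cpow_eq_rpow_re_of_pos hx.1]),
    ← integral_Ioc_eq_integral_Ioo, ← intervalIntegral.integral_of_le zero_le_one,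
    integral_rpow (Or.inl (by linarith))]
  simp [Real.zero_rpow hs.ne']

theorem hasSum_ascPochhammer_div_factorial_mul_div_add {a b : ℂ} (ha : ∀ m : ℕ, a ≠ -m)
    (ha₁ : a.re < 1) (hb : 0 < b.re) :
    HasSum (fun n : ℕ ↦ (ascPochhammer ℂ n).eval a / n ! * (b / (b + n)))
      (Gamma (b + 1) * Gamma (1 - a) / Gamma (b + 1 - a)) := by
  set c : ℕ → ℂ := fun n ↦ (ascPochhammer ℂ n).eval a / (n ! : ℂ)
  set F : ℕ → ℝ → ℂ := fun n x ↦ c n * b * (x : ℂ) ^ (b + n - 1)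
  have hbn (n : ℕ) : 0 < (b + n).re := by simp only [add_re, natCast_re]; positivity
  have hint (n : ℕ) : IntegrableOn (F n) (Ioo 0 1) :=
    (integrableOn_Ioo_cpow_sub_one (hbn n)).const_mul _
  have hintegral (n : ℕ) : ∫ x in Ioo (0 : ℝ) 1, F n x = c n * (b / (b + n)) := by
    simp only [F, integral_const_mul, integral_Ioo_cpow_sub_one (hbn n)]
    ring
  have hnorm : Summable fun n ↦ ∫ x in Ioo (0 : ℝ) 1, ‖F n x‖ := by
    refine ((summable_norm_ascPochhammer_div_factorial_div_add ha ha₁ hb).mul_left ‖b‖).congr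
      fun n ↦ ?_
    simp only [F, c, norm_mul, integral_const_mul, integral_Ioo_norm_cpow_sub_one (hbn n),
      add_re, natCast_re]
    ring
  have hpointwise : ∀ x ∈ Ioo (0 : ℝ) 1,
      ∑' n, F n x = b * ((x : ℂ) ^ (b - 1) * (1 - (x : ℂ)) ^ (1 - a - 1)) := by
    intro x hx
    have hx₀ : (x : ℂ) ≠ 0 := ofReal_ne_zero.mpr hx.1.ne'
    refine (((hasSum_ascPochhammer_div_factorial_mul_pow a (x := x) ?_).mul_left
      (b * (x : ℂ) ^ (b - 1))).congr_fun fun n ↦ ?_).tsum_eq.trans ?_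
    · simpa [abs_of_pos hx.1] using hx.2
    · simp only [F]
      rw [show b + n - 1 = (b - 1) + n by ring, cpow_add _ _ hx₀, cpow_natCast]
      ring
    · ring_nf
  have hsum := hasSum_integral_of_summable_integral_norm hint hnorm
  simp only [hintegral, setIntegral_congr_fun measurableSet_Ioo hpointwise, integral_const_mul,
    ← betaIntegral_eq_integral_Ioo] at hsum
  have hb₀ : b ≠ 0 := fun h ↦ by simp [h] at hb
  have hΓ : Gamma (b + 1 - a) ≠ 0 :=
    Gamma_ne_zero_of_re_pos (by simp only [sub_re, add_re, one_re]; linarith)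
  have hbeta := Gamma_mul_Gamma_eq_betaIntegral hb
    (show 0 < (1 - a).re by simp only [sub_re, one_re, sub_pos]; linarith)
  rw [show b + (1 - a) = b + 1 - a by ring] at hbeta
  have hvalue : Gamma (b + 1) * Gamma (1 - a) / Gamma (b + 1 - a) = b * betaIntegral b (1 - a) := by
    rw [Gamma_add_one b hb₀, mul_assoc, hbeta]
    field_simp
  rwa [hvalue]

/-- For complex `α, β` near `0` with `ℜ(α) < 0`, the hypergeometric
series `Σ_n (α+1)_n (α-β+1)_n / ((α-β+2)_n n!)` converges to
`Γ(α-β+2)Γ(-α)/Γ(1-β)` (Gauss's summation theorem). -/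
theorem stmt17 :
    ∃ ε > (0 : ℝ), ∀ α β : ℂ, ‖α‖ < ε → ‖β‖ < ε → α.re < 0 →
      HasSum
        (fun n : ℕ =>
          (ascPochhammer ℂ n).eval (α + 1) * (ascPochhammer ℂ n).eval (α - β + 1)
            / ((ascPochhammer ℂ n).eval (α - β + 2) * (n.factorial : ℂ)))
        (Complex.Gamma (α - β + 2) * Complex.Gamma (-α) / Complex.Gamma (1 - β)) := by
  refine ⟨1 / 2, by norm_num, fun α β hα hβ hα₀ => ?_⟩
  have hαre := neg_le_of_abs_le (abs_re_le_norm α)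
  have hβre := re_le_norm β
  have ha : 0 < (α + 1).re := by simp only [add_re, one_re]; linarith
  have hb : 0 < (α - β + 1).re := by simp only [add_re, sub_re, one_re]; linarith
  have key := hasSum_ascPochhammer_div_factorial_mul_div_add (ne_neg_natCast_of_re_pos ha)
    (by simpa using hα₀) hb
  rw [show α - β + 1 + 1 = α - β + 2 by ring, show 1 - (α + 1) = -α by ring,
    show α - β + 2 - (α + 1) = 1 - β by ring] at key
  refine key.congr_fun fun n ↦ ?_
  rw [← ascPochhammer_eval_div_eval_add_one hb, show α - β + 1 + 1 = α - β + 2 by ring,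
    div_mul_div_comm]
  ring
end

section
/- Let ψ : 𝔥¹ → 𝔓 be the injective linear map to quasi-symmetric functions and D_A the continuous ring automorphism of 𝔓[[A]] fixing A and sending t_m^{-1} to (t_m+A)^{-1}. Then for every word u = yx^{k₁-1}⋯yx^{k_d-1} ∈ 𝔥¹, one has ψ(α_A(u)) = D_A(ψ(u)); explicitly, Σ_{e₁,…,e_d≥0} ψ(yx^{k₁+e₁-1}⋯yx^{k_d+e_d-1}) ∏_j C(k_j+e_j-1, e_j)(-A)^{e_j} = Σ_{0<m₁<⋯<m_d} ∏_j (t_{m_j}+A)^{-k_j}. -/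
/-!
Compare the coefficients of `Aⁿ` at a monomial `μ` with exponent vector `v` (in increasing
variable order). On the left only the tuple `e = v - k` contributes, since `ψ` of a word is the
indicator of its exponent list; it exists exactly when `k ≤ v` and `Σ (v_j - k_j) = n`, and its
weight `∏ C(k_j + e_j - 1, e_j) = ∏ C(v_j - 1, v_j - k_j)` is the coefficient on the right.
-/

open scoped BigOperators

/-- The ring `𝔓` of quasi-symmetric functions, realized inside the power series ring in
countably many variables `s_m` (`s_m` representing `t_{m+1}⁻¹`). -/
abbrev QS := MvPowerSeries ℕ ℚ

/-- The monomial quasi-symmetric function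
`ψ(yx^{k₁-1}⋯yx^{k_d-1}) = Σ_{m₁<⋯<m_d} t_{m₁}^{-k₁}⋯t_{m_d}^{-k_d}`:
the coefficient of a monomial is `1` exactly when its exponents, read in increasing
variable order, form the list `k`. -/
noncomputable def psiQ (k : List ℕ) : QS := fun μ =>
  if (μ.support.sort (· ≤ ·)).map (fun m => μ m) = k then 1 else 0

/-- The left-hand side
`ψ(α_A(u)) = Σ_{e₁,…,e_d≥0} ψ(yx^{k₁+e₁-1}⋯yx^{k_d+e_d-1}) ∏_j C(k_j+e_j-1, e_j)(-A)^{e_j}`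
as a power series in `A` over `𝔓`. -/
noncomputable def lhs19 (d : ℕ) (k : Fin d → ℕ) : PowerSeries QS :=
  PowerSeries.mk fun n =>
    ((-1 : ℚ) ^ n) •
      ∑ e ∈ Finset.Nat.antidiagonalTuple d n,
        (∏ j, (Nat.choose (k j + e j - 1) (e j) : ℚ)) • psiQ (List.ofFn fun j => k j + e j)

/-- The right-hand side `D_A(ψ(u)) = Σ_{0<m₁<⋯<m_d} ∏_j (t_{m_j}+A)^{-k_j}`, where
`(t_m+A)^{-k} = Σ_e C(k+e-1,e) t_m^{-(k+e)} (-A)^e`, written coefficientwise: the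
coefficient of `Aⁿ` at a monomial `μ` with support `{m₁<⋯<m_d}` and exponents
`μ(m_j) = k_j + e_j`, `Σ e_j = n`, is `(-1)ⁿ ∏_j C(μ(m_j)-1, e_j)`. -/
noncomputable def rhs19 (d : ℕ) (k : Fin d → ℕ) : PowerSeries QS :=
  PowerSeries.mk fun n =>
    (fun μ =>
      let s := μ.support.sort (· ≤ ·)
      if h : s.length = d then
        if (∀ j : Fin d, k j ≤ μ (s.get (Fin.cast h.symm j))) ∧
            (∑ j : Fin d, (μ (s.get (Fin.cast h.symm j)) - k j)) = n then
          ((-1 : ℚ) ^ n) *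
            ∏ j : Fin d,
              (Nat.choose (μ (s.get (Fin.cast h.symm j)) - 1)
                (μ (s.get (Fin.cast h.symm j)) - k j) : ℚ)
        else 0
      else 0 : QS)

theorem sum_antidiagonalTuple_ite_add_eq {M : Type*} [AddCommMonoid M] {d : ℕ} (n : ℕ)
    (k v : Fin d → ℕ) (f : (Fin d → ℕ) → M) :
    ∑ e ∈ Finset.Nat.antidiagonalTuple d n, (if k + e = v then f e else 0) =
      if (∀ j, k j ≤ v j) ∧ ∑ j, (v j - k j) = n then f (v - k) else 0 := by
  by_cases hkv : ∀ j, k j ≤ v j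
  · have hsolve : ∀ e, k + e = v ↔ v - k = e := fun e => by
      rw [eq_comm, tsub_eq_iff_eq_add_of_le hkv, add_comm, eq_comm]
    simp only [hsolve, Finset.sum_ite_eq, Finset.Nat.mem_antidiagonalTuple, Pi.sub_apply,
      hkv, true_and, implies_true]
  · have hne : ∀ e, k + e ≠ v := fun e he => hkv fun j => he ▸ Nat.le_add_right (k j) (e j)
    simp only [hne, if_false, Finset.sum_const_zero, hkv, false_and]

def sortedExponents (μ : ℕ →₀ ℕ) {d : ℕ} (h : (μ.support.sort (· ≤ ·)).length = d) :
    Fin d → ℕ :=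
  fun j => μ ((μ.support.sort (· ≤ ·)).get (Fin.cast h.symm j))

theorem map_sort_support_eq_ofFn (μ : ℕ →₀ ℕ) {d : ℕ}
    (h : (μ.support.sort (· ≤ ·)).length = d) :
    (μ.support.sort (· ≤ ·)).map (fun m => μ m) = List.ofFn (sortedExponents μ h) := by
  apply List.ext_get <;> simp [h, sortedExponents]

theorem coeff_psiQ_ofFn (μ : ℕ →₀ ℕ) {d : ℕ} (w : Fin d → ℕ) :
    MvPowerSeries.coeff μ (psiQ (List.ofFn w)) =
      if h : (μ.support.sort (· ≤ ·)).length = d then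
        if w = sortedExponents μ h then 1 else 0
      else 0 := by
  change (if _ then (1 : ℚ) else 0) = _
  by_cases hd : (μ.support.sort (· ≤ ·)).length = d
  · rw [dif_pos hd]
    simp only [map_sort_support_eq_ofFn μ hd, List.ofFn_inj, eq_comm]
  · rw [dif_neg hd]
    refine if_neg fun hw => hd ?_
    simpa using congrArg List.length hw

theorem coeff_rhs19 (d : ℕ) (k : Fin d → ℕ) (n : ℕ) (μ : ℕ →₀ ℕ) :
    MvPowerSeries.coeff μ (PowerSeries.coeff n (rhs19 d k)) =
      if h : (μ.support.sort (· ≤ ·)).length = d then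
        if (∀ j, k j ≤ sortedExponents μ h j) ∧ ∑ j, (sortedExponents μ h j - k j) = n then
          (-1) ^ n * ∏ j, ((sortedExponents μ h j - 1).choose (sortedExponents μ h j - k j) : ℚ)
        else 0
      else 0 := by
  erw [rhs19, PowerSeries.coeff_mk]
  rfl

theorem stmt19_general (d : ℕ) (k : Fin d → ℕ) :
    lhs19 d k = rhs19 d k := by
  ext n μ
  simp only [lhs19, PowerSeries.coeff_mk, map_smul, map_sum, coeff_psiQ_ofFn, smul_eq_mul,
    coeff_rhs19]
  by_cases hd : (μ.support.sort (· ≤ ·)).length = d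
  · simp only [dif_pos hd, mul_ite, mul_one, mul_zero, ← Pi.add_def]
    rw [sum_antidiagonalTuple_ite_add_eq n k (sortedExponents μ hd)]
    split_ifs with hc
    · simp only [Pi.sub_apply, Nat.add_sub_cancel' (hc.1 _)]
    · exact mul_zero _
  · simp only [dif_neg hd, mul_zero, Finset.sum_const_zero]

/-- For every word `u = yx^{k₁-1}⋯yx^{k_d-1} ∈ 𝔥¹` (all `k_j ≥ 1`),
one has `ψ(α_A(u)) = D_A(ψ(u))` in `𝔓[[A]]`. -/
theorem stmt19 (d : ℕ) (k : Fin d → ℕ) (hk : ∀ j, 1 ≤ k j) :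
    lhs19 d k = rhs19 d k :=
  stmt19_general d k
end
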